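/- The expected number of directed Hamilton paths in a uniformly random tournament on n vertices is n!/2^{n-1}; hence some tournament on n vertices contains at least n!/2^{n-1} directed Hamilton paths. -/

import Mathlib

/-- An orientation of `K_n`: a choice of direction for each edge `{u,v}` with `u < v`. -/
abbrev Orientation' (n : ℕ) : Type := {p : Fin n × Fin n // p.1 < p.2} → Bool

/-- The tournament determined by the orientation `o`: the arc `(u,v)` is present iff
the edge `{u,v}` is oriented from `u` to `v`. -/
def arcOf (n : ℕ) (o : Orientation' n) (u v : Fin n) : Prop :=
  if h : u < v then o ⟨(u, v), h⟩ = true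
  else if h : v < u then o ⟨(v, u), h⟩ = false
  else False

/-- The number of directed Hamilton paths of the tournament determined by `o`
(as sequences, i.e. permutations `τ` with all arcs `(τ i, τ (i+1))` present). -/
noncomputable def hamCount (n : ℕ) (o : Orientation' n) : ℕ :=
  Nat.card {τ : Equiv.Perm (Fin n) //
    ∀ i : ℕ, ∀ h : i + 1 < n, arcOf n o (τ ⟨i, by omega⟩) (τ ⟨i + 1, h⟩)}

/-!
Double counting. An ordering `τ` of the vertices is a Hamilton path exactly when the `n - 1`
pairwise distinct edges `{τ i, τ (i+1)}` carry prescribed directions; this happens for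
`2 ^ (E - (n - 1))` of the `2 ^ E` orientations, `E = n(n-1)/2`. Summing over the `n!` orderings
gives the mean `n! / 2 ^ (n - 1)`, and some orientation attains at least the mean.
-/

open Finset

theorem Nat.card_comp_eq_of_injective {ι α β : Type*} [Fintype ι] [Fintype α]
    [Fintype β] {e : ι → α} (he : Function.Injective e) (b : ι → β) :
    Nat.card {f : α → β // f ∘ e = b} = Fintype.card β ^ (Fintype.card α - Fintype.card ι) := by
  classical
  let split : (α → β) ≃ (ι → β) × ({a // a ∉ Set.range e} → β) :=
    (Equiv.piEquivPiSubtypeProd (· ∈ Set.range e) fun _ => β).trans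
      (Equiv.prodCongr ((Equiv.ofInjective e he).arrowCongr (Equiv.refl β)).symm (Equiv.refl _))
  have hsplit (f : α → β) : (split f).1 = f ∘ e := rfl
  have : {f : α → β // f ∘ e = b} ≃ {g : ι → β // g = b} × ({a // a ∉ Set.range e} → β) :=
    (split.subtypeEquiv fun f => by rw [hsplit]).trans Equiv.prodSubtypeFstEquivSubtypeProd
  rw [Nat.card_congr this, Nat.card_prod, Nat.card_unique, one_mul, Nat.card_fun,
    Nat.card_eq_fintype_card, Nat.card_eq_fintype_card, Fintype.card_subtype_compl,
    Set.card_range_of_injective he]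

theorem Fintype.exists_sum_div_card_le {ι : Type*} [Fintype ι] [Nonempty ι] (f : ι → ℝ) :
    ∃ i, (∑ j, f j) / Fintype.card ι ≤ f i := by
  obtain ⟨i, -, hi⟩ := exists_le_of_sum_le (f := fun _ => (∑ j, f j) / Fintype.card ι) (g := f)
    univ_nonempty (by rw [sum_const, card_univ, nsmul_eq_mul, mul_div_cancel₀ _ (by positivity)])
  exact ⟨i, hi⟩

theorem sum_natCard_subtype_comm {α β : Type*} [Fintype α] [Fintype β] (r : α → β → Prop) :
    ∑ a, Nat.card {b // r a b} = ∑ b, Nat.card {a // r a b} := by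
  classical
  simp only [Nat.card_eq_fintype_card, Fintype.card_subtype, card_filter]
  exact sum_comm

namespace Tournament

variable {n : ℕ}

abbrev Edge (n : ℕ) : Type := {p : Fin n × Fin n // p.1 < p.2}

def edge {u v : Fin n} (h : u ≠ v) : Edge n := ⟨(min u v, max u v), min_lt_max.2 h⟩

theorem arcOf_iff (o : Orientation' n) {u v : Fin n} (h : u ≠ v) :
    arcOf n o u v ↔ o (edge h) = decide (u < v) := by
  rcases h.lt_or_gt with huv | hvu
  · simp [arcOf, edge, huv, huv.le]
  · simp [arcOf, edge, hvu, hvu.le, not_lt_of_gt hvu]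

theorem eq_and_eq_or_eq_and_eq_of_edge_eq {u v u' v' : Fin n} {h : u ≠ v} {h' : u' ≠ v'}
    (he : edge h = edge h') : (u = u' ∧ v = v') ∨ (u = v' ∧ v = u') := by
  simp only [edge, Subtype.mk.injEq, Prod.mk.injEq, min_def, max_def] at he
  split_ifs at he <;> grind

def IsHamPath (o : Orientation' n) (τ : Equiv.Perm (Fin n)) : Prop :=
  ∀ i : ℕ, ∀ h : i + 1 < n, arcOf n o (τ ⟨i, by omega⟩) (τ ⟨i + 1, h⟩)

def pathEdge (τ : Equiv.Perm (Fin n)) (k : Fin (n - 1)) : Edge n :=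
  edge (u := τ ⟨k, by omega⟩) (v := τ ⟨k + 1, by omega⟩) (τ.injective.ne (by simp))

def pathDir (τ : Equiv.Perm (Fin n)) (k : Fin (n - 1)) : Bool :=
  decide (τ ⟨k, by omega⟩ < τ ⟨k + 1, by omega⟩)

theorem isHamPath_iff (o : Orientation' n) (τ : Equiv.Perm (Fin n)) :
    IsHamPath o τ ↔ o ∘ pathEdge τ = pathDir τ := by
  simp only [IsHamPath, funext_iff, Function.comp_apply, pathEdge, pathDir, ← arcOf_iff]
  exact ⟨fun H k => H k (by omega), fun H i h => H ⟨i, by omega⟩⟩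

theorem pathEdge_injective (τ : Equiv.Perm (Fin n)) : Function.Injective (pathEdge τ) := by
  intro k k' h
  rcases eq_and_eq_or_eq_and_eq_of_edge_eq h with ⟨h1, -⟩ | ⟨h1, h2⟩
  · exact Fin.ext (Fin.mk.inj_iff.1 (τ.injective h1))
  · have := Fin.mk.inj_iff.1 (τ.injective h1)
    have := Fin.mk.inj_iff.1 (τ.injective h2)
    omega

theorem sub_one_le_card_edge : n - 1 ≤ Fintype.card (Edge n) := by
  simpa using Fintype.card_le_of_injective _ (pathEdge_injective (1 : Equiv.Perm (Fin n)))

theorem card_isHamPath (τ : Equiv.Perm (Fin n)) :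
    Nat.card {o : Orientation' n // IsHamPath o τ} = 2 ^ (Fintype.card (Edge n) - (n - 1)) := by
  simp_rw [isHamPath_iff]
  simpa using Nat.card_comp_eq_of_injective (pathEdge_injective τ) (pathDir τ)

theorem sum_hamCount :
    ∑ o : Orientation' n, hamCount n o = n.factorial * 2 ^ (Fintype.card (Edge n) - (n - 1)) := by
  rw [show (∑ o, hamCount n o) = ∑ o, Nat.card {τ // IsHamPath o τ} from rfl,
    sum_natCard_subtype_comm]
  simp [card_isHamPath, Fintype.card_perm]

end Tournament

open Tournament in
/-- The expected number of directed Hamilton paths in a uniformly random tournament on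
`n` vertices is `n!/2^(n-1)`; hence some tournament on `n` vertices contains at least
`n!/2^(n-1)` directed Hamilton paths. -/
theorem expected_ham_paths_and_szele (n : ℕ) :
    (∑ o : Orientation' n, (hamCount n o : ℝ)) / (Fintype.card (Orientation' n) : ℝ)
        = (Nat.factorial n : ℝ) / 2 ^ (n - 1) ∧
    ∃ o : Orientation' n, (Nat.factorial n : ℝ) / 2 ^ (n - 1) ≤ (hamCount n o : ℝ) := by
  have hsum : ∑ o : Orientation' n, (hamCount n o : ℝ)
      = n.factorial * 2 ^ (Fintype.card (Edge n) - (n - 1)) := by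
    exact_mod_cast sum_hamCount
  have hcard : Fintype.card (Orientation' n) = 2 ^ Fintype.card (Edge n) := by simp
  have hmean : (∑ o : Orientation' n, (hamCount n o : ℝ)) / (Fintype.card (Orientation' n) : ℝ)
      = (Nat.factorial n : ℝ) / 2 ^ (n - 1) := by
    rw [hsum, hcard, pow_sub₀ _ two_ne_zero sub_one_le_card_edge]
    push_cast
    field_simp
  refine ⟨hmean, ?_⟩
  rw [← hmean]
  exact Fintype.exists_sum_div_card_le _
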